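/- Each right type is inhabited by a right invertible term: if τ ≤ ρ₁ → … → ρₘ → μ and τ → ρᵢ is inhabited for each 1 ≤ i ≤ m, then there exists a right invertible term (namely λz.zM₁…Mₘ where Mᵢ witness inhabitation composed appropriately) that inhabits τ → μ. -/

import Mathlib

/-- Terms of the λ⊥-calculus (de Bruijn indices). -/
inductive Tm : Type
  | var : ℕ → Tm
  | bot : Tm
  | lam : Tm → Tm
  | app : Tm → Tm → Tm
  deriving DecidableEq

namespace Tm

/-- Lift (shift by one) all de Bruijn indices ≥ k. -/
def lift : Tm → ℕ → Tm
  | var n, k => if n < k then var n else var (n+1)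
  | bot, _ => bot
  | lam M, k => lam (lift M (k+1))
  | app M N, k => app (lift M k) (lift N k)

/-- Capture-avoiding substitution of N for variable k. -/
def subst : Tm → ℕ → Tm → Tm
  | var n, k, N => if n < k then var n else if n = k then N else var (n-1)
  | bot, _, _ => bot
  | lam M, k, N => lam (subst M (k+1) (lift N 0))
  | app M P, k, N => app (subst M k N) (subst P k N)

/-- One-step β⊥-reduction (compatible closure). -/
inductive Step : Tm → Tm → Prop
  | beta (M N : Tm) : Step (app (lam M) N) (subst M 0 N)
  | botApp (N : Tm) : Step (app bot N) bot
  | botLam : Step (lam bot) bot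
  | appL {M M'} (N) : Step M M' → Step (app M N) (app M' N)
  | appR (M) {N N'} : Step N N' → Step (app M N) (app M N')
  | lamC {M M'} : Step M M' → Step (lam M) (lam M')

/-- Multi-step reduction. -/
def Red : Tm → Tm → Prop := Relation.ReflTransGen Step

/-- β⊥-conversion: M = N iff they have a common reduct. -/
def Conv (M N : Tm) : Prop := ∃ P, Red M P ∧ Red N P

/-- The identity combinator I = λx.x. -/
def iTm : Tm := lam (var 0)

/-- Composition M ∘ N = λz.M(Nz). -/
def comp (M N : Tm) : Tm := lam (app (lift M 0) (app (lift N 0) (var 0)))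

/-- Apply M to a list of arguments. -/
def applist (M : Tm) (Ms : List Tm) : Tm := Ms.foldl app M

/-- Iterated λ-abstraction. -/
def iterLam : ℕ → Tm → Tm
  | 0, M => M
  | n+1, M => lam (iterLam n M)

/-- The selector λt x₁ … xₘ. t  (a simple right inverse). -/
def sel (m : ℕ) : Tm := iterLam (m+1) (var m)

/-- Number of initial λ-abstractions of a term. -/
def leadLams : Tm → ℕ
  | lam M => leadLams M + 1
  | _ => 0

end Tm

mutual
/-- Strict intersection types μ ::= φ | ω | σ → μ. -/
inductive STy : Type
  | tvar : ℕ → STy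
  | omega : STy
  | arrow : ITy → STy → STy
/-- Intersections σ ::= μ | σ ∧ σ. -/
inductive ITy : Type
  | strict : STy → ITy
  | inter : ITy → ITy → ITy
end

/-- The subtyping preorder on (strict) intersection types. -/
inductive SubTy : ITy → ITy → Prop
  | refl (σ) : SubTy σ σ
  | trans {σ τ ρ} : SubTy σ τ → SubTy τ ρ → SubTy σ ρ
  | toOmega (σ) : SubTy σ (.strict .omega)
  | omegaArr : SubTy (.strict .omega) (.strict (.arrow (.strict .omega) .omega))
  | interL (σ τ) : SubTy (.inter σ τ) σ
  | interR (σ τ) : SubTy (.inter σ τ) τ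
  | interMono {σ₁ σ₂ τ₁ τ₂} : SubTy σ₁ τ₁ → SubTy σ₂ τ₂ → SubTy (.inter σ₁ σ₂) (.inter τ₁ τ₂)
  | arrow {σ τ : ITy} {μ ν : STy} : SubTy τ σ → SubTy (.strict μ) (.strict ν) →
      SubTy (.strict (.arrow σ μ)) (.strict (.arrow τ ν))

/-- σ ∼ τ : mutual subtyping. -/
def EqvTy (σ τ : ITy) : Prop := SubTy σ τ ∧ SubTy τ σ

/-- μ is a conjunct (component) of the intersection σ. -/
inductive IsComp : STy → ITy → Prop
  | strict (μ) : IsComp μ (.strict μ)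
  | left {μ σ} (τ) : IsComp μ σ → IsComp μ (.inter σ τ)
  | right {μ τ} (σ) : IsComp μ τ → IsComp μ (.inter σ τ)

/-- The essential intersection type assignment system (contexts are de Bruijn lists). -/
inductive Der : List ITy → Tm → STy → Prop
  | var {Γ n σ μ} : Γ[n]? = some σ → IsComp μ σ → Der Γ (.var n) μ
  | omega (Γ M) : Der Γ M .omega
  | sub {Γ M μ ν} : Der Γ M μ → SubTy (.strict μ) (.strict ν) → Der Γ M ν
  | lam {Γ M σ μ} : Der (σ :: Γ) M μ → Der Γ (.lam M) (.arrow σ μ)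
  | app {Γ M N σ μ} : Der Γ M (.arrow σ μ) → (∀ ν, IsComp ν σ → Der Γ N ν) →
      Der Γ (.app M N) μ

/-- A strict type is inhabited if some closed term has it. -/
def InhabS (μ : STy) : Prop := ∃ M, Der [] M μ

/-- An intersection is inhabited if a single closed term has all its conjuncts. -/
def InhabI (σ : ITy) : Prop := ∃ M, ∀ μ, IsComp μ σ → Der [] M μ

/-- σ → ρ is inhabited: one term inhabits σ → μ for every conjunct μ of ρ. -/
def InhabArrow (σ ρ : ITy) : Prop := ∃ M, ∀ μ, IsComp μ ρ → Der [] M (.arrow σ μ)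

/-- ρ₁ → … → ρₘ → μ. -/
def arrows (l : List ITy) (μ : STy) : STy := l.foldr .arrow μ

/-- μ ◁ ν : μ is a retract of ν. -/
def Retract (μ ν : STy) : Prop :=
  ∃ L R, Der [] L (.arrow (.strict ν) μ) ∧ Der [] R (.arrow (.strict μ) ν) ∧
    Tm.Conv (Tm.comp L R) Tm.iTm

/-! The witness is `M = λz. z (N₁ z) … (Nₘ z)`. Typing it only needs that the variable
`z : τ` also has type `ρ₁ → … → ρₘ → μ`, i.e. that subtyping is admissible for the conjuncts
of a term's type. Its right inverse is the selector `R = λt x₁ … xₘ. t`: in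
`M ∘ R = λy. M (R y)` the term `R y` reduces to `λx₁ … xₘ. y`, which discards the `m`
arguments supplied by `M` and returns `y`. -/

theorem List.exists_forall₂_of_forall_mem {α β : Type*} {R : α → β → Prop} :
    ∀ {l : List α}, (∀ a ∈ l, ∃ b, R a b) → ∃ l', List.Forall₂ R l l'
  | [], _ => ⟨[], .nil⟩
  | a :: l, h => by
    obtain ⟨b, hb⟩ := h a List.mem_cons_self
    obtain ⟨l', hl'⟩ :=
      List.exists_forall₂_of_forall_mem fun x hx => h x (List.mem_cons_of_mem a hx)
    exact ⟨b :: l', .cons hb hl'⟩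

namespace Tm

@[simp]
theorem applist_cons (M N : Tm) (Ns : List Tm) : applist M (N :: Ns) = applist (app M N) Ns :=
  rfl

theorem lift_applist (M : Tm) (Ns : List Tm) (k : ℕ) :
    lift (applist M Ns) k = applist (lift M k) (Ns.map (lift · k)) := by
  induction Ns generalizing M with
  | nil => rfl
  | cons N Ns ih => simp only [applist_cons, ih, lift, List.map_cons]

theorem subst_applist (M : Tm) (Ns : List Tm) (k : ℕ) (P : Tm) :
    subst (applist M Ns) k P = applist (subst M k P) (Ns.map (subst · k P)) := by
  induction Ns generalizing M with
  | nil => rfl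
  | cons N Ns ih => simp only [applist_cons, ih, subst, List.map_cons]

theorem lift_iterLam_var {n j k : ℕ} (h : j < n + k) :
    lift (iterLam n (var j)) k = iterLam n (var j) := by
  induction n generalizing k with
  | zero => simp [iterLam, lift, show j < k by omega]
  | succ n ih => simp only [iterLam, lift, ih (show j < n + (k + 1) by omega)]

theorem subst_iterLam_var_self (n k j : ℕ) :
    subst (iterLam n (var (n + k))) k (var j) = iterLam n (var (n + j)) := by
  induction n generalizing k j with
  | zero => simp [iterLam, subst]
  | succ n ih =>
    simp only [iterLam, subst, lift, Nat.not_lt_zero, if_false]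
    rw [show n + 1 + k = n + (k + 1) by omega, ih, show n + (j + 1) = n + 1 + j by omega]

theorem subst_iterLam_var_succ (n k : ℕ) (P : Tm) :
    subst (iterLam n (var (n + k + 1))) k P = iterLam n (var (n + k)) := by
  induction n generalizing k P with
  | zero => simp [iterLam, subst]
  | succ n ih =>
    simp only [iterLam, subst]
    rw [show n + 1 + k + 1 = n + (k + 1) + 1 by omega, ih, show n + (k + 1) = n + 1 + k by omega]

theorem Step.applist {M M' : Tm} (h : Step M M') (Ns : List Tm) :
    Step (applist M Ns) (applist M' Ns) := by
  induction Ns generalizing M M' with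
  | nil => exact h
  | cons N Ns ih => exact ih (h.appL N)

theorem Red.lam {M M' : Tm} (h : Red M M') : Red (lam M) (lam M') :=
  Relation.ReflTransGen.lift Tm.lam (fun _ _ => Step.lamC) _ _ h

theorem red_applist_iterLam_var (Ns : List Tm) :
    Red (applist (iterLam Ns.length (var Ns.length)) Ns) (var 0) := by
  induction Ns with
  | nil => exact .refl
  | cons N Ns ih =>
    have hβ : Step (app (iterLam (Ns.length + 1) (var (Ns.length + 1))) N)
        (iterLam Ns.length (var Ns.length)) := by
      simpa [iterLam, subst_iterLam_var_succ Ns.length 0 N] using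
        Step.beta (iterLam Ns.length (var (Ns.length + 1))) N
    exact .head (hβ.applist Ns) ih

theorem conv_comp_lam_applist_sel (Ns : List Tm) :
    Conv (comp (lam (applist (var 0) Ns)) (sel Ns.length)) iTm := by
  set m := Ns.length
  set P := iterLam m (var m)
  set Ns' := (Ns.map (lift · 1)).map (subst · 0 P)
  have hsel : Step (app (lift (sel m) 0) (var 0)) P := by
    have hP : subst P 0 (var 0) = P := by simpa using subst_iterLam_var_self m 0 0
    rw [sel, lift_iterLam_var (by omega), ← hP]
    exact Step.beta P (var 0)
  have hliftM : lift (lam (applist (var 0) Ns)) 0 = lam (applist (var 0) (Ns.map (lift · 1))) := by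
    simp [lift, lift_applist]
  have hM : Step (app (lam (applist (var 0) (Ns.map (lift · 1)))) P) (applist P Ns') := by
    have hβ := Step.beta (applist (var 0) (Ns.map (lift · 1))) P
    rwa [subst_applist, show subst (var 0) 0 P = P by simp [subst]] at hβ
  have hlen : Ns'.length = m := by simp [Ns', m]
  refine ⟨iTm, .head (Step.lamC (Step.appR _ hsel)) ?_, .refl⟩
  rw [hliftM]
  exact .head (Step.lamC hM) (Red.lam (by simpa [hlen] using red_applist_iterLam_var Ns'))

end Tm

theorem IsComp.eq_of_strict {μ ν : STy} (h : IsComp μ (.strict ν)) : μ = ν := by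
  cases h; rfl

theorem IsComp.of_inter {μ : STy} {σ τ : ITy} (h : IsComp μ (.inter σ τ)) :
    IsComp μ σ ∨ IsComp μ τ := by
  cases h with
  | left _ h => exact .inl h
  | right _ h => exact .inr h

theorem SubTy.der {σ τ : ITy} (h : SubTy σ τ) {Γ : List ITy} {M : Tm}
    (hM : ∀ μ, IsComp μ σ → Der Γ M μ) : ∀ ν, IsComp ν τ → Der Γ M ν := by
  induction h with
  | refl => exact hM
  | trans _ _ ih₁ ih₂ => exact ih₂ (ih₁ hM)
  | toOmega =>
    intro ν hν
    obtain rfl := hν.eq_of_strict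
    exact .omega _ _
  | omegaArr =>
    intro ν hν
    obtain rfl := hν.eq_of_strict
    exact .sub (.omega _ _) .omegaArr
  | interL => exact fun ν hν => hM ν (.left _ hν)
  | interR => exact fun ν hν => hM ν (.right _ hν)
  | interMono _ _ ih₁ ih₂ =>
    intro ν hν
    rcases hν.of_inter with hν | hν
    · exact ih₁ (fun μ hμ => hM μ (.left _ hμ)) ν hν
    · exact ih₂ (fun μ hμ => hM μ (.right _ hμ)) ν hν
  | arrow h₁ h₂ =>
    intro ν hν
    obtain rfl := hν.eq_of_strict
    exact .sub (hM _ (.strict _)) (.arrow h₁ h₂)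

theorem Der.lift {Γ : List ITy} {M : Tm} {μ : STy} (h : Der Γ M μ) :
    ∀ {Γ₁ Γ₂ : List ITy} (σ : ITy), Γ = Γ₁ ++ Γ₂ →
      Der (Γ₁ ++ σ :: Γ₂) (M.lift Γ₁.length) μ := by
  induction h with
  | @var _ n _ _ hget hcomp =>
    rintro Γ₁ Γ₂ σ rfl
    simp only [Tm.lift]
    split_ifs with hn
    · rw [List.getElem?_append_left hn] at hget
      exact .var (by rwa [List.getElem?_append_left hn]) hcomp
    · rw [List.getElem?_append_right (by omega)] at hget
      refine .var ?_ hcomp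
      rw [List.getElem?_append_right (by omega),
        show n + 1 - Γ₁.length = n - Γ₁.length + 1 by omega]
      simpa using hget
  | omega => exact fun _ _ => .omega _ _
  | sub _ hs ih => exact fun σ hΓ => (ih σ hΓ).sub hs
  | @lam _ _ σ' _ _ ih =>
    rintro Γ₁ Γ₂ σ rfl
    exact .lam (ih (Γ₁ := σ' :: Γ₁) σ rfl)
  | app _ _ ih₁ ih₂ => exact fun σ hΓ => .app (ih₁ σ hΓ) fun ν hν => ih₂ ν hν σ hΓ

theorem Der.applist {Γ : List ITy} {M : Tm} {ρs : List ITy} {Ns : List Tm} {μ : STy}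
    (hM : Der Γ M (arrows ρs μ))
    (hNs : List.Forall₂ (fun ρ N => ∀ ν, IsComp ν ρ → Der Γ N ν) ρs Ns) :
    Der Γ (Tm.applist M Ns) μ := by
  induction hNs generalizing M with
  | nil => exact hM
  | cons hN _ ih => exact ih (.app hM hN)

theorem InhabArrow.exists_der_app_var {τ ρ : ITy} (h : InhabArrow τ ρ) :
    ∃ N, ∀ ν, IsComp ν ρ → Der [τ] N ν := by
  obtain ⟨N, hN⟩ := h
  refine ⟨.app (N.lift 0) (.var 0), fun ν hν => .app ?_ fun ν' hν' => .var rfl hν'⟩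
  simpa using (hN ν hν).lift (Γ₁ := []) τ rfl

/-- each right type is inhabited by a right invertible term. -/
theorem right_type_inhabited {τ : ITy} {μ : STy} {ρs : List ITy}
    (hsub : SubTy τ (.strict (arrows ρs μ))) (hinh : ∀ ρ ∈ ρs, InhabArrow τ ρ) :
    ∃ M : Tm, Der [] M (.arrow τ μ) ∧ ∃ R, Tm.Conv (Tm.comp M R) Tm.iTm := by
  obtain ⟨Ns, hNs⟩ :=
    List.exists_forall₂_of_forall_mem fun ρ hρ => (hinh ρ hρ).exists_der_app_var
  have hz : Der [τ] (.var 0) (arrows ρs μ) :=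
    hsub.der (fun ν hν => .var rfl hν) _ (.strict _)
  exact ⟨.lam (Tm.applist (.var 0) Ns), .lam (hz.applist hNs), Tm.sel Ns.length,
    Tm.conv_comp_lam_applist_sel Ns⟩
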